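/- arXiv:2210.07956 — 10 statements merged into one kernel-verified Lean document; each statement's English description precedes it below -/
import Mathlib

section
/- Let a be a natural number coprime to 10 and let n ≥ 2. If x ≡ y (mod 10^n) with x ≥ y, then a^x ≡ a^y (mod 10^n). -/
open ArithmeticFunction

theorem Nat.pow_modEq_pow_of_modEq_carmichael {a m x y : ℕ} (ha : a.Coprime m)
    (h : x ≡ y [MOD carmichael m]) : a ^ x ≡ a ^ y [MOD m] := by
  rw [← ZMod.natCast_eq_natCast_iff]
  let u := ZMod.unitOfCoprime a ha
  have hord : orderOf u ∣ carmichael m := orderOf_dvd_of_pow_eq_one (pow_carmichael u)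
  have hu : u ^ x = u ^ y := pow_eq_pow_iff_modEq.2 (h.of_dvd hord)
  simpa [u] using congrArg Units.val hu

theorem carmichael_ten_pow_dvd {n : ℕ} (hn : 2 ≤ n) : carmichael (10 ^ n) ∣ 10 ^ n := by
  have h10 : 10 ^ n = 2 ^ n * 5 ^ n := by rw [← mul_pow]; norm_num
  rw [h10, carmichael_mul (Nat.Coprime.pow n n (by norm_num))]
  refine lcm_dvd ?_ ?_
  · calc carmichael (2 ^ n) ∣ (2 ^ n).totient := carmichael_dvd_totient _
      _ ∣ 2 ^ n := by
        rw [Nat.totient_prime_pow Nat.prime_two (by omega)]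
        simpa using pow_dvd_pow 2 (n.sub_le 1)
      _ ∣ 2 ^ n * 5 ^ n := dvd_mul_right _ _
  -- λ(5 ^ n) = 4 * 5 ^ (n - 1), and the factor 4 is where `2 ≤ n` is needed.
  · rw [carmichael_pow_of_prime_ne_two n (by norm_num) (by norm_num),
      Nat.totient_prime_pow (by norm_num) (by omega), mul_comm (2 ^ n)]
    exact mul_dvd_mul (pow_dvd_pow 5 (n.sub_le 1)) (pow_dvd_pow 2 hn)

theorem stmt6_general (a n x y : ℕ) (ha : Nat.Coprime a 10) (hn : 2 ≤ n)
    (hxy : x ≡ y [MOD 10 ^ n]) :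
    a ^ x ≡ a ^ y [MOD 10 ^ n] :=
  Nat.pow_modEq_pow_of_modEq_carmichael (ha.pow_right n) (hxy.of_dvd (carmichael_ten_pow_dvd hn))

theorem stmt6 (a n x y : ℕ) (ha : Nat.Coprime a 10) (hn : 2 ≤ n)
    (hxy : x ≡ y [MOD 10 ^ n]) (hyx : y ≤ x) :
    a ^ x ≡ a ^ y [MOD 10 ^ n] :=
  stmt6_general a n x y ha hn hxy
end

section
/- Let a > 1 be a natural number coprime to 10, and define the tetration tower T(1) = a, T(b+1) = a^(T(b)). Then for every n there exists B such that for all b ≥ B, T(b+1) ≡ T(b) (mod 10^n). In other words, for each n the sequence of the last n digits of T(b) is eventually constant. -/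
/-!
Since `a` is coprime to `m`, the residue of `a ^ x` modulo `m` only depends on `x` modulo `φ m`;
hence if the tower stabilizes modulo `φ m`, it stabilizes modulo `m` one level higher up.
As `φ (p ^ (n + 1)) = p ^ n * (p - 1)`, induction on `n` together with the Chinese remainder
theorem gives stabilization modulo every power of `p` once it holds modulo `p - 1`:
first for `p = 2`, then for `p = 5` (as `5 - 1 = 2 ^ 2`), and finally modulo `10 ^ n = 2 ^ n * 5 ^ n`.
-/

open Filter Nat

theorem pow_modEq_pow_of_modEq_totient {a m x y : ℕ} (ha : a.Coprime m) (hxy : x ≡ y [MOD φ m]) :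
    a ^ x ≡ a ^ y [MOD m] := by
  wlog hle : x ≤ y generalizing x y
  · exact (this hxy.symm (le_of_not_ge hle)).symm
  obtain ⟨t, ht⟩ : φ m ∣ y - x := (Nat.modEq_iff_dvd' hle).mp hxy
  obtain rfl : y = x + φ m * t := by omega
  calc a ^ x = a ^ x * 1 ^ t := by ring
    _ ≡ a ^ x * (a ^ φ m) ^ t [MOD m] := (ModEq.pow_totient ha).symm.pow t |>.mul_left _
    _ = a ^ (x + φ m * t) := by ring

theorem Filter.Eventually.modEq_mul {ι : Type*} {l : Filter ι} {u v : ι → ℕ} {m k : ℕ}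
    (hmk : m.Coprime k) (hm : ∀ᶠ i in l, u i ≡ v i [MOD m]) (hk : ∀ᶠ i in l, u i ≡ v i [MOD k]) :
    ∀ᶠ i in l, u i ≡ v i [MOD m * k] :=
  (hm.and hk).mono fun _ h => (modEq_and_modEq_iff_modEq_mul hmk).mp h

section Tower

variable {a : ℕ} {T : ℕ → ℕ}

theorem eventually_tower_modEq_of_totient (hT : ∀ b, T (b + 1) = a ^ T b) {m : ℕ}
    (ha : a.Coprime m) (h : ∀ᶠ b in atTop, T (b + 1) ≡ T b [MOD φ m]) :
    ∀ᶠ b in atTop, T (b + 1) ≡ T b [MOD m] := by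
  rw [← map_add_atTop_eq_nat 1, eventually_map]
  filter_upwards [h] with b hb
  have hpow := pow_modEq_pow_of_modEq_totient ha hb
  rwa [← hT, ← hT] at hpow

theorem eventually_tower_modEq_prime_pow (hT : ∀ b, T (b + 1) = a ^ T b) {p : ℕ} (hp : p.Prime)
    (ha : a.Coprime p) (hp1 : ∀ᶠ b in atTop, T (b + 1) ≡ T b [MOD p - 1]) (n : ℕ) :
    ∀ᶠ b in atTop, T (b + 1) ≡ T b [MOD p ^ n] := by
  induction n with
  | zero => simp [modEq_one]
  | succ n ih =>
    refine eventually_tower_modEq_of_totient hT (ha.pow_right _) ?_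
    rw [totient_prime_pow_succ hp]
    have hcop : (p ^ n).Coprime (p - 1) :=
      ((coprime_self_sub_right hp.one_le).mpr (coprime_one_right p)).pow_left n
    exact ih.modEq_mul hcop hp1

end Tower

theorem stmt7_general (a : ℕ) (hcop : Nat.Coprime a 10)
    (T : ℕ → ℕ) (hT : ∀ b, T (b + 1) = a ^ T b) :
    ∀ n : ℕ, ∃ B : ℕ, ∀ b ≥ B, T (b + 1) ≡ T b [MOD 10 ^ n] := by
  intro n
  have h2 : ∀ k, ∀ᶠ b in atTop, T (b + 1) ≡ T b [MOD 2 ^ k] :=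
    eventually_tower_modEq_prime_pow hT prime_two (hcop.coprime_dvd_right (by norm_num))
      (by simp [modEq_one])
  have h5 : ∀ k, ∀ᶠ b in atTop, T (b + 1) ≡ T b [MOD 5 ^ k] :=
    eventually_tower_modEq_prime_pow hT (by norm_num) (hcop.coprime_dvd_right (by norm_num))
      (h2 2)
  have h10 := (h2 n).modEq_mul (Coprime.pow n n (by norm_num)) (h5 n)
  rw [← mul_pow] at h10
  exact eventually_atTop.mp h10

theorem stmt7 (a : ℕ) (ha : 1 < a) (hcop : Nat.Coprime a 10)
    (T : ℕ → ℕ) (hT1 : T 1 = a) (hT : ∀ b, T (b + 1) = a ^ T b) :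
    ∀ n : ℕ, ∃ B : ℕ, ∀ b ≥ B, T (b + 1) ≡ T b [MOD 10 ^ n] :=
  stmt7_general a hcop T hT
end

section
/- Let a > 1 be coprime to 10, let n ≥ 2, and define the tetration tower T(1) = a, T(b+1) = a^(T(b)). If T(b+1) ≡ T(b) (mod 10^n) for some b with T(b) ≥ n (a height guaranteeing the tower exceeds n), then T(b+2) ≡ T(b+1) (mod 10^n). That is, once n digits are frozen at some height, they remain frozen at all greater heights. -/
/-!
The Carmichael function satisfies `λ(10ⁿ) = lcm(λ(2ⁿ), λ(5ⁿ))`, which divides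
`lcm(2ⁿ⁻¹, 4·5ⁿ⁻¹)` and hence `10ⁿ` once `n ≥ 2`. So `a ^ 10ⁿ ≡ 1 (mod 10ⁿ)` for `a` coprime
to `10`. Hence `a ^ x` modulo `10ⁿ` depends only on `x` modulo `10ⁿ`, and
`T(b+1) ≡ T(b)` gives `a ^ T(b+1) ≡ a ^ T(b)`.
-/

open ArithmeticFunction

theorem Nat.ModEq.pow_carmichael {a m : ℕ} (h : a.Coprime m) : a ^ carmichael m ≡ 1 [MOD m] := by
  rw [← ZMod.natCast_eq_natCast_iff]
  have h := congrArg Units.val (ArithmeticFunction.pow_carmichael (ZMod.unitOfCoprime a h))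
  simpa only [Nat.cast_pow, Nat.cast_one, Units.val_pow_eq_pow_val, ZMod.coe_unitOfCoprime,
    Units.val_one] using h

theorem Nat.pow_modEq_pow_mod {a k m : ℕ} (hk : a ^ k ≡ 1 [MOD m]) (x : ℕ) :
    a ^ x ≡ a ^ (x % k) [MOD m] := by
  conv_lhs => rw [← Nat.div_add_mod x k, pow_add, pow_mul]
  simpa using (hk.pow (x / k)).mul_right (a ^ (x % k))

theorem Nat.ModEq.pow_modEq_pow {a k m x y : ℕ} (hk : a ^ k ≡ 1 [MOD m])
    (hxy : x ≡ y [MOD k]) : a ^ x ≡ a ^ y [MOD m] := by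
  have hmod : x % k = y % k := hxy
  exact (Nat.pow_modEq_pow_mod hk x).trans (hmod ▸ (Nat.pow_modEq_pow_mod hk y).symm)

theorem pow_ten_pow_modEq_one {a n : ℕ} (hcop : a.Coprime 10) (hn : 2 ≤ n) :
    a ^ 10 ^ n ≡ 1 [MOD 10 ^ n] := by
  obtain ⟨k, hk⟩ := carmichael_ten_pow_dvd hn
  have h := (Nat.ModEq.pow_carmichael (hcop.pow_right n)).pow k
  rwa [← pow_mul, ← hk, one_pow] at h

theorem stmt8_general (a n b : ℕ) (hcop : Nat.Coprime a 10) (hn : 2 ≤ n)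
    (T : ℕ → ℕ) (hT : ∀ b, T (b + 1) = a ^ T b)
    (hfroz : T (b + 1) ≡ T b [MOD 10 ^ n]) :
    T (b + 2) ≡ T (b + 1) [MOD 10 ^ n] :=
  calc T (b + 2) = a ^ T (b + 1) := hT (b + 1)
    _ ≡ a ^ T b [MOD 10 ^ n] := (pow_ten_pow_modEq_one hcop hn).pow_modEq_pow hfroz
    _ = T (b + 1) := (hT b).symm

theorem stmt8 (a n b : ℕ) (ha : 1 < a) (hcop : Nat.Coprime a 10) (hn : 2 ≤ n)
    (T : ℕ → ℕ) (hT1 : T 1 = a) (hT : ∀ b, T (b + 1) = a ^ T b)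
    (hb : n ≤ T b) (hfroz : T (b + 1) ≡ T b [MOD 10 ^ n]) :
    T (b + 2) ≡ T (b + 1) [MOD 10 ^ n] :=
  stmt8_general a n b hcop hn T hT hfroz
end

section
/- Let a be a natural number congruent to 4 modulo 10 and let n = v_5(a+1) be the 5-adic valuation of a + 1. Define T(1) = a, T(b+1) = a^(T(b)). Then for every b ≥ 1, T(b+1) ≡ T(b) (mod 10^{(b-1)·n}). -/
private lemma mul_le_pow_aux (a : ℕ) (ha : 2 ≤ a) : ∀ m, 1 ≤ m → a * m ≤ a ^ m := by
  intro m
  induction m with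
  | zero => omega
  | succ m ih =>
    intro _
    rcases Nat.eq_or_lt_of_le (Nat.one_le_iff_ne_zero.mpr (by omega) : 1 ≤ m + 1) with h | h
    · simp [← h]
    · have hm : 1 ≤ m := by omega
      have h1 : a ≤ a * m := Nat.le_mul_of_pos_right a hm
      calc a * (m + 1) = a * m + a := by ring
        _ ≤ a * m + a * m := Nat.add_le_add_left h1 _
        _ = 2 * (a * m) := by ring
        _ ≤ a * (a * m) := Nat.mul_le_mul_right _ ha
        _ ≤ a * a ^ m := Nat.mul_le_mul_left a (ih hm)
        _ = a ^ (m + 1) := by ring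

private lemma key5 (a n : ℕ) (ha5 : a % 5 = 4) (h5 : 5 ^ n ∣ a + 1) (k m : ℕ)
    (hk : 5 ^ k ∣ m) : 5 ^ (n + k) ∣ (a ^ 2) ^ m - 1 := by
  have hp : Nat.Prime 5 := by norm_num
  have ha1 : 1 ≤ a := by omega
  have hfac : a ^ 2 - 1 = (a + 1) * (a - 1) := by
    have := Nat.sq_sub_sq a 1
    simpa using this
  have hdvd1 : (a + 1) ∣ a ^ 2 - 1 := hfac ▸ Dvd.intro _ rfl
  have hxy : (5 : ℕ) ∣ a ^ 2 - 1 := by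
    refine dvd_trans ?_ hdvd1
    omega
  have hx : ¬ (5 : ℕ) ∣ a ^ 2 := by
    intro h
    have := hp.dvd_of_dvd_pow h
    omega
  have hlte := Nat.emultiplicity_pow_sub_pow hp (by decide) hxy hx m
  simp only [one_pow] at hlte
  apply pow_dvd_of_le_emultiplicity
  rw [hlte, Nat.cast_add]
  exact add_le_add (le_emultiplicity_of_pow_dvd (h5.trans hdvd1))
    (le_emultiplicity_of_pow_dvd hk)

theorem stmt9 (a : ℕ) (ha : a % 10 = 4) (n : ℕ) (hn : n = padicValNat 5 (a + 1))
    (T : ℕ → ℕ) (hT1 : T 1 = a) (hT : ∀ b, T (b + 1) = a ^ T b) :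
    ∀ b, 1 ≤ b → T (b + 1) ≡ T b [MOD 10 ^ ((b - 1) * n)] := by
  have ha4 : 4 ≤ a := by omega
  have ha5 : a % 5 = 4 := by omega
  have ha2 : a % 2 = 0 := by omega
  have h5n : 5 ^ n ∣ a + 1 := hn ▸ pow_padicValNat_dvd
  have hna : n ≤ a := by
    have h1 : 5 ^ n ≤ a + 1 := Nat.le_of_dvd (by omega) h5n
    have h2 : n < 5 ^ n := Nat.lt_pow_self (n := n) (by norm_num)
    omega
  -- positivity of T
  have Tpos : ∀ b, 1 ≤ b → 1 ≤ T b := by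
    intro b hb
    cases b with
    | zero => omega
    | succ b =>
      cases b with
      | zero => rw [hT1]; omega
      | succ b => rw [hT]; exact Nat.one_le_pow _ _ (by omega)
  -- evenness of T
  have Teven : ∀ b, 1 ≤ b → 2 ∣ T b := by
    intro b hb
    cases b with
    | zero => omega
    | succ b =>
      cases b with
      | zero => rw [hT1]; omega
      | succ b =>
        rw [hT]
        exact Dvd.dvd.pow (by omega) (by have := Tpos (b + 1) (by omega); omega)
  -- lower bound T b ≥ b * n
  have Tge : ∀ b, 1 ≤ b → b * n ≤ T b := by
    intro b
    induction b with
    | zero => omega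
    | succ b ih =>
      intro _
      rcases Nat.eq_zero_or_pos b with hb0 | hb0
      · subst hb0; simpa [hT1] using hna
      · have h1 := ih hb0
        have h2 := Tpos b hb0
        rw [hT]
        calc (b + 1) * n = b * n + n := by ring
          _ ≤ T b + T b := by
              have : n ≤ b * n := Nat.le_mul_of_pos_left n hb0
              omega
          _ = 2 * T b := by ring
          _ ≤ a * T b := Nat.mul_le_mul_right _ (by omega)
          _ ≤ a ^ T b := mul_le_pow_aux a (by omega) _ h2
  -- main induction
  intro b hb
  induction b with
  | zero => omega
  | succ b ih =>
    rcases Nat.eq_zero_or_pos b with hb0 | hb0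
    · subst hb0
      have h0 : (0 + 1 - 1) * n = 0 := by simp
      rw [h0, pow_zero]
      exact Nat.modEq_one
    · have IH := ih hb0
      set k := (b - 1) * n with hk
      have hlt : T b < T (b + 1) := by
        rw [hT]; exact Nat.lt_pow_self (n := T b) (by omega)
      have hle : T b ≤ T (b + 1) := le_of_lt hlt
      have hdvd10 : 10 ^ k ∣ T (b + 1) - T b := (Nat.modEq_iff_dvd' hle).mp IH.symm
      set d := T (b + 1) - T b with hd
      have hds : T (b + 1) = T b + d := by omega
      have hdeven : 2 ∣ d := Nat.dvd_sub (Teven (b + 1) (by omega)) (Teven b hb0)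
      obtain ⟨m, hm⟩ := hdeven
      have h5k : 5 ^ k ∣ m := by
        have h1 : 5 ^ k ∣ d := dvd_trans (pow_dvd_pow_of_dvd (by norm_num) k) hdvd10
        have h2 : Nat.Coprime (5 ^ k) 2 := Nat.Coprime.pow_left _ (by norm_num)
        exact (Nat.Coprime.dvd_of_dvd_mul_left h2 (hm ▸ h1))
      have hkey : 5 ^ (n + k) ∣ a ^ d - 1 := by
        have := key5 a n ha5 h5n k m h5k
        rwa [← pow_mul, show 2 * m = d from hm.symm] at this
      have hbn : (b + 1 - 1) * n = n + k := by
        simp only [Nat.add_sub_cancel, hk]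
        cases b with
        | zero => omega
        | succ c => simp [Nat.succ_sub_one]; ring
      rw [hbn]
      have hle2 : T (b + 1) ≤ T (b + 2) := by
        rw [hT (b + 1)]
        exact le_of_lt (Nat.lt_pow_self (a := a) (by omega))
      rw [Nat.ModEq.comm, Nat.modEq_iff_dvd' hle2]
      have heq : T (b + 2) - T (b + 1) = a ^ T b * (a ^ d - 1) := by
        have e1 : T (b + 2) = a ^ T b * a ^ d := by rw [hT (b + 1), hds, pow_add]
        have e2 : T (b + 1) = a ^ T b * 1 := by rw [hT b, mul_one]
        rw [e1, e2, ← Nat.mul_sub]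
      rw [heq]
      have h10 : (10 : ℕ) ^ (n + k) = 2 ^ (n + k) * 5 ^ (n + k) := by
        rw [← mul_pow]; norm_num
      rw [h10]
      apply mul_dvd_mul
      · calc (2 : ℕ) ^ (n + k) ∣ 2 ^ T b := by
              apply pow_dvd_pow
              have h1 := Tge b hb0
              have h2 : n + k = b * n := by
                rw [← hbn]; simp
              omega
          _ ∣ a ^ T b := pow_dvd_pow_of_dvd (by omega) _
      · exact hkey
end

section
/- Let a > 4 be a natural number congruent to 4 modulo 10 and let n = v_5(a+1). Define T(1) = a, T(b+1) = a^(T(b)). Then for every b ≥ 2, T(b+1) is NOT congruent to T(b) modulo 10^{(b-1)·n + 1}. -/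
theorem stmt10 (a : ℕ) (ha : a % 10 = 4) (ha4 : 4 < a)
    (n : ℕ) (hn : n = padicValNat 5 (a + 1))
    (T : ℕ → ℕ) (hT1 : T 1 = a) (hT : ∀ b, T (b + 1) = a ^ T b) :
    ∀ b, 2 ≤ b → ¬ (T (b + 1) ≡ T b [MOD 10 ^ ((b - 1) * n + 1)]) := by
  have h5p : Nat.Prime 5 := by norm_num
  haveI : Fact (Nat.Prime 5) := ⟨h5p⟩
  have h5 : ¬ (5 ∣ a) := by omega
  have ha1 : 1 < a := by omega
  -- T is strictly increasing (consecutive terms)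
  have hmono : ∀ b, 1 ≤ b → T b < T (b + 1) := by
    intro b hb
    induction b with
    | zero => omega
    | succ c ih =>
      rcases Nat.eq_zero_or_pos c with hc | hc
      · subst hc
        rw [hT 1, hT1]
        exact Nat.lt_pow_self ha1
      · have h := (Nat.pow_lt_pow_iff_right ha1).mpr (ih hc)
        rw [← hT c, ← hT (c + 1)] at h
        exact h
  -- T b is positive and even for b ≥ 1
  have hTpe : ∀ b, 1 ≤ b → 0 < T b ∧ 2 ∣ T b := by
    intro b hb
    induction b with
    | zero => omega
    | succ c ih =>
      rcases Nat.eq_zero_or_pos c with hc | hc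
      · subst hc; rw [hT1]; omega
      · obtain ⟨hpos, _⟩ := ih hc
        rw [hT c]
        exact ⟨Nat.pow_pos (by omega), dvd_pow (by omega) (by omega)⟩
  -- a ^ 2 ≡ 1 mod 5
  have hsq1 : a ^ 2 ≡ 1 [MOD 5] := by
    have h4 : a ≡ 4 [MOD 5] := by unfold Nat.ModEq; omega
    calc a ^ 2 ≡ 4 ^ 2 [MOD 5] := h4.pow 2
      _ ≡ 1 [MOD 5] := by decide
  have hsqle : 1 ≤ a ^ 2 := Nat.one_le_pow _ _ (by omega)
  have hdvd_sq : 5 ∣ a ^ 2 - 1 := (Nat.modEq_iff_dvd' hsqle).mp hsq1.symm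
  have hndvd_sq : ¬ (5 ∣ a ^ 2) := fun h => h5 (h5p.dvd_of_dvd_pow h)
  -- emultiplicity of a^2 - 1 is n
  have hfac : a ^ 2 - 1 = (a - 1) * (a + 1) := by
    have h1 : 1 ≤ a := by omega
    zify [h1, hsqle]; ring
  have hem_sq : emultiplicity 5 (a ^ 2 - 1) = (n : ℕ∞) := by
    rw [hfac, emultiplicity_mul h5p.prime, emultiplicity_eq_zero.mpr (by omega : ¬ (5 ∣ a - 1)),
      zero_add, ← padicValNat_eq_emultiplicity (by omega : a + 1 ≠ 0), hn]
  -- key lemma: exact 5-adic valuation of consecutive differences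
  have key : ∀ b, 1 ≤ b → emultiplicity 5 (T (b + 1) - T b) = (((b - 1) * n : ℕ) : ℕ∞) := by
    intro b hb
    induction b with
    | zero => omega
    | succ c ih =>
      rcases Nat.eq_zero_or_pos c with hc | hc
      · -- base case b = 1 : T 2 - T 1 = a^a - a, valuation 0
        subst hc
        rw [hT 1, hT1]
        simp only [Nat.sub_self, Nat.zero_mul, Nat.cast_zero]
        rw [emultiplicity_eq_zero]
        intro hdvd
        obtain ⟨m, hm⟩ : 2 ∣ a := by omega
        have hpow : a ^ a ≡ 1 [MOD 5] := by
          calc a ^ a = (a ^ 2) ^ m := by rw [← pow_mul, ← hm]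
            _ ≡ 1 ^ m [MOD 5] := hsq1.pow m
            _ = 1 := one_pow m
        have hle : a ≤ a ^ a := (Nat.lt_pow_self ha1).le
        have h0 := (Nat.modEq_iff_dvd' hle).mpr hdvd
        have h1 : a % 5 = 1 % 5 := h0.trans hpow
        omega
      · -- inductive step
        have hemD := ih hc
        have hlt := hmono c hc
        set D := T (c + 1) - T c with hDdef
        have hDpos : 0 < D := by omega
        have hDeven : 2 ∣ D := by
          obtain ⟨_, h1⟩ := hTpe c hc
          obtain ⟨_, h2⟩ := hTpe (c + 1) (by omega)
          omega
        obtain ⟨m, hm⟩ := hDeven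
        have hTD : T (c + 1) = T c + D := by omega
        have hdiff : T (c + 2) - T (c + 1) = a ^ T c * (a ^ D - 1) := by
          have h1 : T (c + 2) = a ^ T c * a ^ D := by
            rw [hT (c + 1), hTD, pow_add]
          have h2 : T (c + 1) = a ^ T c * 1 := by rw [mul_one, hT c]
          rw [h1, h2, ← Nat.mul_sub]
        rw [hdiff, emultiplicity_mul h5p.prime,
          emultiplicity_eq_zero.mpr (fun h => h5 (h5p.dvd_of_dvd_pow h)), zero_add]
        have hlte : emultiplicity 5 (a ^ D - 1) = (n : ℕ∞) + emultiplicity 5 m := by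
          have := Nat.emultiplicity_pow_sub_pow h5p (by decide) hdvd_sq hndvd_sq m
          rw [← pow_mul, ← hm, one_pow, hem_sq] at this
          exact this
        have hem_m : emultiplicity 5 m = (((c - 1) * n : ℕ) : ℕ∞) := by
          rw [hm, emultiplicity_mul h5p.prime,
            emultiplicity_eq_zero.mpr (by norm_num : ¬ (5 ∣ 2)), zero_add] at hemD
          exact hemD
        rw [hlte, hem_m]
        obtain ⟨d, rfl⟩ : ∃ d, c = d + 1 := ⟨c - 1, by omega⟩
        have harith : (d + 1 + 1 - 1) * n = n + (d + 1 - 1) * n := by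
          simp [add_mul]; ring
        rw [harith]
        push_cast
        ring
  -- conclude
  intro b hb hmod
  have hlt := hmono b (by omega)
  have hdvd10 : 10 ^ ((b - 1) * n + 1) ∣ T (b + 1) - T b :=
    (Nat.modEq_iff_dvd' hlt.le).mp hmod.symm
  have hdvd5 : 5 ^ ((b - 1) * n + 1) ∣ T (b + 1) - T b :=
    dvd_trans (pow_dvd_pow_of_dvd (by norm_num) _) hdvd10
  have hle := pow_dvd_iff_le_emultiplicity.mp hdvd5
  rw [key b (by omega)] at hle
  have := ENat.coe_le_coe.mp hle
  omega
end

section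
/- Let a be a natural number with a ≡ 6 (mod 10) and a ≥ 6, and let n = v_5(a-1). Define T(1) = a, T(b+1) = a^(T(b)). Then for every b ≥ 2, T(b+1) ≡ T(b) (mod 10^{(b+1)·n}). -/
/-- If `5^j ∣ x - 1` with `j ≥ 1`, then `5^(j+1) ∣ x^5 - 1`. -/
lemma aux_L1 (x : ℤ) (j : ℕ) (hj : 1 ≤ j) (h : (5:ℤ)^j ∣ x - 1) :
    (5:ℤ)^(j+1) ∣ x^5 - 1 := by
  have key : x^5 - 1 = (x-1)*5 + (x-1)^2*(x^3+2*x^2+3*x+4) := by ring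
  rw [key]
  apply dvd_add
  · rw [pow_succ]
    exact mul_dvd_mul h dvd_rfl
  · have h2 : (5:ℤ)^(j+1) ∣ (x-1)^2 := by
      calc (5:ℤ)^(j+1) ∣ (5:ℤ)^(2*j) := pow_dvd_pow 5 (by omega)
        _ = ((5:ℤ)^j)^2 := by ring
        _ ∣ (x-1)^2 := pow_dvd_pow_of_dvd h 2
    exact h2.mul_right _

/-- LTE-style: if `5^n ∣ x - 1` (`n ≥ 1`) and `5^k ∣ m` then `5^(n+k) ∣ x^m - 1`. -/
lemma aux_L (x : ℤ) (n : ℕ) (hn : 1 ≤ n) (h : (5:ℤ)^n ∣ x - 1) :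
    ∀ k m : ℕ, 5^k ∣ m → (5:ℤ)^(n+k) ∣ x^m - 1 := by
  intro k
  induction k with
  | zero =>
    intro m _
    have : x - 1 ∣ x^m - 1 := by
      have := sub_dvd_pow_sub_pow x 1 m
      simpa using this
    simpa using dvd_trans h this
  | succ k ih =>
    intro m hm
    obtain ⟨c, hc⟩ := hm
    have hm' : m = (5^k * c) * 5 := by rw [hc]; ring
    have h1 : (5:ℤ)^(n+k) ∣ x^(5^k * c) - 1 := ih _ ⟨c, rfl⟩
    have h2 := aux_L1 (x^(5^k * c)) (n+k) (by omega) h1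
    rw [hm', pow_mul]
    have : n + (k+1) = (n + k) + 1 := by omega
    rw [this]
    exact h2

lemma aux_3n (n : ℕ) : 3 * n ≤ 5 ^ n := by
  induction n with
  | zero => simp
  | succ k ih =>
    have : 1 ≤ 5 ^ k := Nat.one_le_pow _ _ (by norm_num)
    calc 3 * (k+1) = 3 * k + 3 := by ring
      _ ≤ 5 ^ k + 3 := by omega
      _ ≤ 5 ^ k + 4 * 5 ^ k := by omega
      _ = 5 ^ (k+1) := by ring

lemma aux_6m (m : ℕ) (hm : 1 ≤ m) : 6 * m ≤ 6 ^ m := by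
  induction m with
  | zero => omega
  | succ k ih =>
    rcases Nat.eq_zero_or_pos k with hk | hk
    · subst hk; norm_num
    · have h1 := ih hk
      have h6 : (6:ℕ) ≤ 6 ^ k := Nat.le_self_pow (by omega) 6
      have hp : (6:ℕ) ^ (k+1) = 6 * 6 ^ k := by rw [pow_succ]; ring
      omega

theorem stmt11 (a : ℕ) (ha : a % 10 = 6) (ha6 : 6 ≤ a)
    (n : ℕ) (hn : n = padicValNat 5 (a - 1))
    (T : ℕ → ℕ) (hT1 : T 1 = a) (hT : ∀ b, T (b + 1) = a ^ T b) :
    ∀ b, 2 ≤ b → T (b + 1) ≡ T b [MOD 10 ^ ((b + 1) * n)] := by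
  -- basic facts
  have ha1 : 1 ≤ a := by omega
  have h5dvd : 5 ∣ a - 1 := by omega
  have hane : a - 1 ≠ 0 := by omega
  have hdvd5n : (5:ℕ)^n ∣ a - 1 := by rw [hn]; exact pow_padicValNat_dvd
  have hn1 : 1 ≤ n := by
    by_contra h
    have hn0 : n = 0 := by omega
    rw [hn] at hn0
    rcases padicValNat.eq_zero_iff.mp hn0 with h | h | h
    · omega
    · omega
    · exact h h5dvd
  have h5le : 5^n ≤ a - 1 := Nat.le_of_dvd (by omega) hdvd5n
  have h3n : 3 * n ≤ a := le_trans (le_trans (aux_3n n) h5le) (by omega)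
  -- 5^n ∣ (a:ℤ) - 1
  have hdvdZ : (5:ℤ)^n ∣ (a:ℤ) - 1 := by
    have h := Int.natCast_dvd_natCast.mpr hdvd5n
    push_cast [Nat.cast_sub ha1] at h
    exact h
  -- growth lemma: T k ≥ (k+2)*n for k ≥ 1
  have hG : ∀ k, 1 ≤ k → (k + 2) * n ≤ T k := by
    intro k hk
    induction k with
    | zero => omega
    | succ j ih =>
      rcases Nat.eq_zero_or_pos j with hj | hj
      · subst hj
        have : (0+1+2) * n = 3 * n := by ring
        rw [this]
        simpa [hT1] using h3n
      · have h1 := ih hj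
        have hTj1 : 1 ≤ T j := le_trans (by nlinarith) h1
        have h6 : 6 * T j ≤ 6 ^ T j := aux_6m _ hTj1
        have hpow : (6:ℕ) ^ T j ≤ a ^ T j := Nat.pow_le_pow_left ha6 _
        rw [hT]
        calc (j + 1 + 2) * n ≤ 6 * ((j + 2) * n) := by nlinarith
          _ ≤ 6 * T j := by omega
          _ ≤ 6 ^ T j := h6
          _ ≤ a ^ T j := hpow
  -- T k ≥ 1 for k ≥ 1
  have hT1le : ∀ k, 1 ≤ k → 1 ≤ T k := by
    intro k hk
    rcases Nat.eq_or_lt_of_le hk with h | h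
    · rw [← h, hT1]; omega
    · obtain ⟨j, rfl⟩ : ∃ j, k = j + 1 := ⟨k - 1, by omega⟩
      rw [hT]; exact Nat.one_le_pow _ _ (by omega)
  -- monotonicity
  have hmono : ∀ k, 1 ≤ k → T k ≤ T (k + 1) := by
    intro k hk
    rw [hT]
    calc T k ≤ 2 ^ T k := (Nat.lt_two_pow_self).le
      _ ≤ a ^ T k := Nat.pow_le_pow_left (by omega) _
  -- 5-part: for b ≥ 1, 5^((b+1)*n) ∣ T(b+1) - T b  (in ℤ)
  have h5part : ∀ b, 1 ≤ b → (5:ℤ)^((b + 1) * n) ∣ (T (b + 1) : ℤ) - T b := by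
    intro b hb
    induction b with
    | zero => omega
    | succ j ih =>
      rcases Nat.eq_zero_or_pos j with hj | hj
      · -- base case b = 1 : T 2 - T 1 = a^a - a = a * (a^(a-1) - 1)
        subst hj
        rw [hT, hT1]
        push_cast
        have key : (a:ℤ)^a - a = a * ((a:ℤ)^(a-1) - 1) := by
          have : (a:ℤ)^a = a * (a:ℤ)^(a-1) := by
            rw [← pow_succ']
            congr 1
            omega
          rw [this]; ring
        rw [key]
        have h1 : (5:ℤ)^(n + n) ∣ (a:ℤ)^(a-1) - 1 :=
          aux_L (a:ℤ) n hn1 hdvdZ n (a - 1) hdvd5n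
        have : (1 + 1) * n = n + n := by ring
        rw [this]
        exact h1.mul_left _
      · -- step: from 5^((j+1)*n) ∣ T(j+1) - T j
        have ihj := ih hj
        have hle : T j ≤ T (j + 1) := hmono j hj
        set d := T (j + 1) - T j with hd
        have hcast : (T (j+1) : ℤ) - T j = (d : ℤ) := by
          rw [hd]; push_cast [Nat.cast_sub hle]; ring
        have hdvd_d : (5:ℕ)^((j + 1) * n) ∣ d := by
          have := ihj
          rw [hcast] at this
          exact_mod_cast this
        have hsum : T (j + 1) = T j + d := by omega
        have e1 : (T (j+1+1) : ℤ) = (a:ℤ)^(T j) * (a:ℤ)^d := by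
          rw [hT (j+1), hsum]; push_cast [pow_add]; ring
        have e2 : (T (j+1) : ℤ) = (a:ℤ)^(T j) := by rw [hT j]; push_cast; ring
        have key : (a:ℤ)^(T j) * (a:ℤ)^d - (a:ℤ)^(T j)
            = (a:ℤ)^(T j) * ((a:ℤ)^d - 1) := by ring
        rw [e1, e2, key]
        have h1 : (5:ℤ)^(n + (j + 1) * n) ∣ (a:ℤ)^d - 1 :=
          aux_L (a:ℤ) n hn1 hdvdZ ((j + 1) * n) d hdvd_d
        have heq : (j + 1 + 1) * n = n + (j + 1) * n := by ring
        rw [heq]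
        exact h1.mul_left _
  -- main proof
  intro b hb
  obtain ⟨c, rfl⟩ : ∃ c, b = c + 2 := ⟨b - 2, by omega⟩
  have hle : T (c + 2) ≤ T (c + 3) := hmono (c + 2) (by omega)
  rw [Nat.ModEq.comm, Nat.modEq_iff_dvd' hle]
  set e := (c + 2 + 1) * n with he
  -- 2-part
  have h2a : (2:ℕ) ∣ a := by omega
  have hTc1 : e ≤ T (c + 1) := by
    have := hG (c + 1) (by omega)
    calc e = (c + 3) * n := by rw [he]
      _ = (c + 1 + 2) * n := by ring_nf
      _ ≤ T (c + 1) := this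
  have hTc2 : e ≤ T (c + 2) := le_trans hTc1 (hmono (c+1) (by omega))
  have h2dvd : ∀ k, e ≤ k → (2:ℕ)^e ∣ a ^ k := by
    intro k hk
    calc (2:ℕ)^e ∣ 2^k := pow_dvd_pow 2 hk
      _ ∣ a^k := pow_dvd_pow_of_dvd h2a k
  have h2T2 : (2:ℕ)^e ∣ T (c + 2) := by rw [hT]; exact h2dvd _ hTc1
  have h2T3 : (2:ℕ)^e ∣ T (c + 3) := by rw [show c+3 = (c+2)+1 from rfl, hT]; exact h2dvd _ hTc2
  have h2part : (2:ℕ)^e ∣ T (c + 3) - T (c + 2) := Nat.dvd_sub h2T3 h2T2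
  -- 5-part (to ℕ)
  have h5Z := h5part (c + 2) (by omega)
  have hcast : (T (c+3) : ℤ) - T (c+2) = ((T (c+3) - T (c+2) : ℕ) : ℤ) := by
    push_cast [Nat.cast_sub hle]; ring
  rw [hcast] at h5Z
  have h5part' : (5:ℕ)^e ∣ T (c + 3) - T (c + 2) := by
    rw [he]
    exact_mod_cast h5Z
  -- combine
  have hcop : Nat.Coprime (2^e) (5^e) := Nat.Coprime.pow _ _ (by norm_num)
  have hmul := hcop.mul_dvd_of_dvd_of_dvd h2part h5part'
  calc (10:ℕ)^e = 2^e * 5^e := by rw [← Nat.mul_pow]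
    _ ∣ T (c + 3) - T (c + 2) := hmul
end

section
/- Let a be a natural number congruent to 15 modulo 20, and let n = v_2(a+1). Define T(1) = a, T(b+1) = a^(T(b)). Then for every b ≥ 2, T(b+1) ≡ T(b) (mod 10^{b·n + 1}). -/
/-- If `a` is odd and `2^n ∣ a+1`, then `2^(n+j) ∣ a^(2^j) - 1` for `j ≥ 1`. -/
lemma aux_claim (a n : ℕ) (hodd : a % 2 = 1) (hdvd : (2:ℤ)^n ∣ (a:ℤ) + 1) :
    ∀ j, 1 ≤ j → (2:ℤ)^(n+j) ∣ (a:ℤ)^(2^j) - 1 := by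
  intro j hj
  induction j with
  | zero => omega
  | succ j ih =>
    rcases Nat.eq_or_lt_of_le hj with h1 | h1
    · -- j + 1 = 1
      have hj0 : j = 0 := by omega
      subst hj0
      have h2 : (2:ℤ) ∣ (a:ℤ) - 1 := ⟨((a / 2 : ℕ) : ℤ), by push_cast; omega⟩
      have heq : (a:ℤ)^(2^1) - 1 = ((a:ℤ) + 1) * ((a:ℤ) - 1) := by ring
      rw [heq, pow_succ]
      exact mul_dvd_mul hdvd h2
    · have hj1 : 1 ≤ j := by omega
      have ih' := ih hj1
      have hodd' : (2:ℤ) ∣ (a:ℤ)^(2^j) + 1 := by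
        have hmod : (a:ℤ)^(2^j) % 2 = 1 := by
          have := Int.ModEq.pow (2^j) (show (a:ℤ) ≡ 1 [ZMOD 2] from by
            unfold Int.ModEq; omega)
          simpa [Int.ModEq] using this
        omega
      have key : (a:ℤ)^(2^(j+1)) - 1 = ((a:ℤ)^(2^j) - 1) * ((a:ℤ)^(2^j) + 1) := by
        rw [pow_succ 2 j, pow_mul]
        ring
      rw [key, show n + (j + 1) = (n + j) + 1 from rfl, pow_succ]
      exact mul_dvd_mul ih' hodd'

/-- If `a` is odd, `2^n ∣ a+1`, `j ≥ 1` and `2^j ∣ m`, then `2^(n+j) ∣ a^m - 1`. -/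
lemma aux_pow (a n : ℕ) (hodd : a % 2 = 1) (hdvd : (2:ℤ)^n ∣ (a:ℤ) + 1)
    (j m : ℕ) (hj : 1 ≤ j) (hm : 2^j ∣ m) : (2:ℤ)^(n+j) ∣ (a:ℤ)^m - 1 := by
  obtain ⟨t, rfl⟩ := hm
  have h1 : (a:ℤ)^(2^j) - 1 ∣ ((a:ℤ)^(2^j))^t - 1 := by
    simpa using sub_dvd_pow_sub_pow ((a:ℤ)^(2^j)) 1 t
  rw [pow_mul]
  exact dvd_trans (aux_claim a n hodd hdvd j hj) h1

lemma aux_two_mul_le : ∀ m : ℕ, 1 ≤ m → m ≤ 2^(m-1) := by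
  intro m hm
  induction m with
  | zero => omega
  | succ m ih =>
    rcases Nat.eq_or_lt_of_le hm with h | h
    · simp [← h]
    · have h1 : 1 ≤ m := by omega
      have h2 := ih h1
      have h3 : 2^(m-1) * 2 ≤ 2^m := by
        rw [← pow_succ]
        exact Nat.pow_le_pow_right (by norm_num) (by omega)
      simp only [Nat.add_sub_cancel]
      calc m + 1 ≤ 2^(m-1) * 2 := by omega
        _ ≤ 2^m := h3

lemma aux_lin : ∀ m : ℕ, 4 ≤ m → 2*m + 2 ≤ 2^m := by
  intro m hm
  induction m with
  | zero => omega
  | succ m ih =>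
    rcases Nat.eq_or_lt_of_le hm with h | h
    · rw [← h]; norm_num
    · have := ih (by omega)
      have h2 : 2^m ≥ 2 := by
        calc 2 = 2^1 := rfl
          _ ≤ 2^m := Nat.pow_le_pow_right (by norm_num) (by omega)
      rw [pow_succ]
      omega

theorem stmt13 (a : ℕ) (ha : a % 20 = 15)
    (n : ℕ) (hn : n = padicValNat 2 (a + 1))
    (T : ℕ → ℕ) (hT1 : T 1 = a) (hT : ∀ b, T (b + 1) = a ^ T b) :
    ∀ b, 2 ≤ b → T (b + 1) ≡ T b [MOD 10 ^ (b * n + 1)] := by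
  have ha15 : 15 ≤ a := by omega
  have hodd : a % 2 = 1 := by omega
  have ha5 : 5 ∣ a := by omega
  -- 2^n divides a+1
  have hdvdN : 2^n ∣ a + 1 := by rw [hn]; exact pow_padicValNat_dvd
  have hdvd : (2:ℤ)^n ∣ (a:ℤ) + 1 := by
    have := Int.natCast_dvd_natCast.mpr hdvdN
    push_cast at this
    exact this
  -- a ≥ 2n+1
  have han : 2 * n + 1 ≤ a := by
    rcases le_or_gt n 7 with h | h
    · omega
    · have h2 : 2^n ≤ a + 1 := Nat.le_of_dvd (by omega) hdvdN
      have h3 := aux_lin n (by omega)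
      omega
  -- growth : a*b ≤ T b
  have hgrow : ∀ b, 1 ≤ b → a * b ≤ T b := by
    intro b hb
    induction b with
    | zero => omega
    | succ b ih =>
      rcases Nat.eq_or_lt_of_le hb with h | h
      · have hb0 : b = 0 := by omega
        subst hb0
        simp [hT1]
      · have hb1 : 1 ≤ b := by omega
        have hTb := ih hb1
        rw [hT b]
        have hab1 : 1 ≤ a * b := by
          calc 1 ≤ a * 1 := by omega
            _ ≤ a * b := Nat.mul_le_mul_left a hb1
        have h2 : a ^ (a * b) ≤ a ^ (T b) := Nat.pow_le_pow_right (by omega) hTb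
        have h3 : a * (b + 1) ≤ a ^ (a * b) := by
          have hsplit : a ^ (a * b) = a * a ^ (a * b - 1) := by
            rw [← pow_succ']
            congr 1
            omega
          rw [hsplit]
          have h4 : a * b ≤ 2 ^ (a * b - 1) := aux_two_mul_le (a * b) hab1
          have h5 : 2 ^ (a*b - 1) ≤ a ^ (a*b - 1) := Nat.pow_le_pow_left (by omega) _
          have h6 : b + 1 ≤ a * b := by nlinarith
          calc a * (b+1) ≤ a * (a * b) := Nat.mul_le_mul_left a h6
            _ ≤ a * 2 ^ (a*b-1) := Nat.mul_le_mul_left a h4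
            _ ≤ a * a ^ (a*b-1) := Nat.mul_le_mul_left a h5
        omega
  have hmono : ∀ b, 1 ≤ b → T b ≤ T (b + 1) := by
    intro b _
    rw [hT b]
    exact Nat.le_of_lt (Nat.lt_pow_self (n := T b) (show 1 < a by omega))
  -- 2-adic part
  have htwo : ∀ b, 1 ≤ b → (2:ℤ)^(b*n+1) ∣ (T (b+1) : ℤ) - (T b : ℤ) := by
    intro b hb
    induction b with
    | zero => omega
    | succ b ih =>
      rcases Nat.eq_or_lt_of_le hb with h | h
      · -- base : b = 0
        have hb0 : b = 0 := by omega
        subst hb0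
        have h2 : (2:ℤ)^(n+1) ∣ (a:ℤ)^(a-1) - 1 :=
          aux_pow a n hodd hdvd 1 (a-1) le_rfl (by omega)
        have heq : (a:ℤ)^a - (a:ℤ) = (a:ℤ) * ((a:ℤ)^(a-1) - 1) := by
          rw [mul_sub, mul_one, ← pow_succ', show a - 1 + 1 = a from by omega]
        have hexp : (0+1) * n + 1 = n + 1 := by ring
        rw [hexp, hT 1, hT1]
        push_cast
        rw [heq]
        exact Dvd.dvd.mul_left h2 _
      · have hb1 : 1 ≤ b := by omega
        have ih' := ih hb1
        have hmle : T b ≤ T (b+1) := hmono b hb1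
        set m := T (b+1) - T b with hm
        have hcast : ((m : ℕ) : ℤ) = (T (b+1) : ℤ) - (T b : ℤ) := by omega
        have hmdvd : 2^(b*n+1) ∣ m := by
          have hZ : ((2:ℕ)^(b*n+1) : ℤ) ∣ ((m : ℕ) : ℤ) := by
            rw [hcast]; push_cast; exact ih'
          exact_mod_cast hZ
        have key : (2:ℤ)^(n + (b*n+1)) ∣ (a:ℤ)^m - 1 :=
          aux_pow a n hodd hdvd (b*n+1) m (by omega) hmdvd
        have hsum : T b + m = T (b+1) := by omega
        have e1 : T (b+1+1) = a ^ (T b) * a ^ m := by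
          rw [hT (b+1), ← hsum, pow_add]
        have e2 : T (b+1) = a ^ (T b) := hT b
        have heq : (T (b+1+1) : ℤ) - (T (b+1) : ℤ)
            = (a:ℤ)^(T b) * ((a:ℤ)^m - 1) := by
          rw [e1, e2]; push_cast; ring
        have hexp : (b+1)*n + 1 = n + (b*n+1) := by ring
        rw [heq, hexp]
        exact Dvd.dvd.mul_left key _
  -- 5-adic part: 5^(b*n+1) ∣ T b for b ≥ 2
  have hfive : ∀ b, 2 ≤ b → 5^(b*n+1) ∣ T b := by
    intro b hb
    obtain ⟨c, rfl⟩ : ∃ c, b = c + 1 := ⟨b - 1, by omega⟩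
    have hc1 : 1 ≤ c := by omega
    have hTc : (c+1) * n + 1 ≤ T c := by
      have h1 := hgrow c hc1
      have h2 : (c+1) * n + 1 ≤ a * c := by nlinarith
      omega
    rw [hT c]
    calc (5:ℕ)^((c+1)*n+1) ∣ 5^(T c) := pow_dvd_pow 5 hTc
      _ ∣ a^(T c) := pow_dvd_pow_of_dvd ha5 _
  -- combine
  intro b hb
  have h2Z := htwo b (by omega)
  have h5a := hfive b hb
  have h5b : 5^(b*n+1) ∣ T (b+1) := by
    have h := hfive (b+1) (by omega)
    have hle : b * n + 1 ≤ (b+1) * n + 1 := by nlinarith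
    exact dvd_trans (pow_dvd_pow 5 hle) h
  have h5Z : (5:ℤ)^(b*n+1) ∣ (T (b+1) : ℤ) - (T b : ℤ) := by
    have ha' := Int.natCast_dvd_natCast.mpr h5b
    have hb' := Int.natCast_dvd_natCast.mpr h5a
    push_cast at ha' hb'
    exact dvd_sub ha' hb'
  have h10 : (10:ℤ)^(b*n+1) ∣ (T (b+1) : ℤ) - (T b : ℤ) := by
    have hcop : IsCoprime ((2:ℤ)^(b*n+1)) ((5:ℤ)^(b*n+1)) := by
      apply IsCoprime.pow
      exact Int.isCoprime_iff_gcd_eq_one.mpr (by norm_num)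
    have hmul := hcop.mul_dvd h2Z h5Z
    rw [show (10:ℤ)^(b*n+1) = (2:ℤ)^(b*n+1) * (5:ℤ)^(b*n+1) by
      rw [← mul_pow]; norm_num]
    exact hmul
  rw [Nat.ModEq.comm, Nat.modEq_iff_dvd]
  push_cast
  exact h10
end

section
/- Let a be a natural number with a ≡ 2 (mod 20) or a ≡ 18 (mod 20), and let n = v_5(a^2+1). Define T(1) = a, T(b+1) = a^(T(b)). Then for every b ≥ 2, T(b+1) ≡ T(b) (mod 10^{(b-2)·n}). -/
private lemma five_pow_dvd_int (a : ℤ) (n : ℕ) (hn1 : 1 ≤ n) (h : (5:ℤ)^n ∣ a^2 + 1) :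
    ∀ k, (5:ℤ)^(n+k) ∣ a^(4*5^k) - 1 := by
  intro k
  induction k with
  | zero =>
      have e : a^(4*5^0) - 1 = (a^2 + 1) * (a^2 - 1) := by norm_num; ring
      rw [Nat.add_zero, e]
      exact h.mul_right _
  | succ k ih =>
      have hc : a^(4*5^(k+1)) = (a^(4*5^k))^5 := by
        rw [← pow_mul]; congr 1; ring
      set c := a^(4*5^k) with hcdef
      have h5 : (5:ℤ) ∣ c - 1 :=
        dvd_trans (dvd_pow_self 5 (by omega : n + k ≠ 0)) ih
      have e : c^5 - 1 = (c - 1) * (c^4 + c^3 + c^2 + c + 1) := by ring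
      have h5' : (5:ℤ) ∣ c^4 + c^3 + c^2 + c + 1 := by
        have e2 : c^4 + c^3 + c^2 + c + 1 = (c-1)*(c^3+2*c^2+3*c+4) + 5 := by ring
        rw [e2]
        exact dvd_add (h5.mul_right _) ⟨1, by ring⟩
      rw [hc, e, show n+(k+1) = (n+k)+1 from by omega, pow_succ]
      exact mul_dvd_mul ih h5'

private lemma pow_modeq_one' (a n : ℕ) (hn1 : 1 ≤ n) (h : 5^n ∣ a^2+1) (k : ℕ) :
    a^(4*5^k) ≡ 1 [MOD 5^(n+k)] := by
  have hz : (5:ℤ)^n ∣ (a:ℤ)^2 + 1 := by exact_mod_cast h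
  have hd := five_pow_dvd_int (a:ℤ) n hn1 hz k
  symm
  rw [Nat.modEq_iff_dvd]
  push_cast
  exact hd

private lemma two_mul_le_pow (m : ℕ) (hm : 1 ≤ m) : 2*m ≤ 2^m := by
  obtain ⟨j, rfl⟩ : ∃ j, m = j+1 := ⟨m-1, by omega⟩
  have := @Nat.lt_two_pow_self j
  calc 2*(j+1) ≤ 2*2^j := by omega
    _ = 2^(j+1) := by ring

theorem stmt14 (a : ℕ) (ha : a % 20 = 2 ∨ a % 20 = 18)
    (n : ℕ) (hn : n = padicValNat 5 (a ^ 2 + 1))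
    (T : ℕ → ℕ) (hT1 : T 1 = a) (hT : ∀ b, T (b + 1) = a ^ T b) :
    ∀ b, 2 ≤ b → T (b + 1) ≡ T b [MOD 10 ^ ((b - 2) * n)] := by
  haveI : Fact (Nat.Prime 5) := ⟨by norm_num⟩
  have ha2 : 2 ≤ a := by omega
  have haeven : 2 ∣ a := by omega
  have h5dvd : 5 ∣ a^2 + 1 := by
    rcases ha with h | h
    · obtain ⟨q, rfl⟩ : ∃ q, a = 20*q + 2 := ⟨a/20, by omega⟩
      exact ⟨80*q^2 + 16*q + 1, by ring⟩
    · obtain ⟨q, rfl⟩ : ∃ q, a = 20*q + 18 := ⟨a/20, by omega⟩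
      exact ⟨80*q^2 + 144*q + 65, by ring⟩
  have hn1 : 1 ≤ n := by
    rw [hn]
    exact one_le_padicValNat_of_dvd (by positivity) h5dvd
  have hpn : 5^n ∣ a^2 + 1 := by rw [hn]; exact pow_padicValNat_dvd
  have hna : n ≤ a^2 := by
    have h1 : 5^n ≤ a^2+1 := Nat.le_of_dvd (by positivity) hpn
    have h2 : n < 5^n := Nat.lt_pow_self (n := n) (by norm_num)
    omega
  have hT2 : ∀ b, 1 ≤ b → 2 ≤ T b := by
    intro b hb
    induction b, hb using Nat.le_induction with
    | base => rw [hT1]; exact ha2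
    | succ b hb ih =>
        rw [hT]
        calc 2 ≤ a := ha2
          _ = a^1 := (pow_one a).symm
          _ ≤ a^(T b) := Nat.pow_le_pow_right (by omega) (by omega)
  have hsize : ∀ b, 2 ≤ b → (b-1)*a^2 ≤ T b := by
    intro b hb
    induction b, hb using Nat.le_induction with
    | base =>
        rw [hT, hT1]
        simpa using Nat.pow_le_pow_right (by omega) ha2
    | succ b hb ih =>
        rw [hT]
        have h4a : 4 ≤ a^2 := by calc 4 = 2^2 := by norm_num
                                    _ ≤ a^2 := Nat.pow_le_pow_left ha2 2
        have hTb4 : a^2 ≤ T b := le_trans (Nat.le_mul_of_pos_left (a^2) (by omega)) ih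
        have hmul : (b+1-1)*a^2 = (b-1)*a^2 + a^2 := by
          rw [show b+1-1 = (b-1)+1 from by omega, Nat.succ_mul]
        calc (b+1-1)*a^2 = (b-1)*a^2 + a^2 := hmul
          _ ≤ T b + a^2 := by omega
          _ ≤ 2*(T b) := by omega
          _ ≤ 2^(T b) := two_mul_le_pow _ (by omega)
          _ ≤ a^(T b) := Nat.pow_le_pow_left ha2 _
  have hmono : ∀ b, T b < T (b+1) := by
    intro b
    rw [hT]
    calc T b < 2^(T b) := @Nat.lt_two_pow_self _
      _ ≤ a^(T b) := Nat.pow_le_pow_left ha2 _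
  have h4dvd : ∀ b, 2 ≤ b → 4 ∣ T b := by
    intro b hb
    obtain ⟨c, rfl⟩ : ∃ c, b = c+1 := ⟨b-1, by omega⟩
    rw [hT]
    have h2Tc : 2 ≤ T c := hT2 c (by omega)
    refine dvd_trans ?_ (pow_dvd_pow a h2Tc)
    obtain ⟨u, rfl⟩ := haeven
    exact ⟨u^2, by ring⟩
  intro b hb
  induction b, hb using Nat.le_induction with
  | base =>
      simp only [show (2:ℕ)-2 = 0 from rfl, Nat.zero_mul, pow_zero]
      exact Nat.modEq_one
  | succ b hb ih =>
      set k := (b-2)*n with hk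
      have hbn : n + k = (b-1)*n := by
        rw [hk, show b-1 = (b-2)+1 from by omega, Nat.succ_mul]
        omega
      have hXY : T b ≤ T (b+1) := le_of_lt (hmono b)
      have hdvd10 : 10^k ∣ T (b+1) - T b := (Nat.modEq_iff_dvd' hXY).mp ih.symm
      have h5k : 5^k ∣ T (b+1) - T b :=
        dvd_trans (pow_dvd_pow_of_dvd (by norm_num) k) hdvd10
      have h4 : 4 ∣ T (b+1) - T b :=
        Nat.dvd_sub (h4dvd (b+1) (by omega)) (h4dvd b hb)
      have h45 : 4*5^k ∣ T (b+1) - T b :=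
        Nat.Coprime.mul_dvd_of_dvd_of_dvd (Nat.Coprime.pow_right k (by norm_num)) h4 h5k
      obtain ⟨t, ht⟩ := h45
      have h5mod : a^(T (b+1)) ≡ a^(T b) [MOD 5^(n+k)] := by
        have e : a^(T (b+1)) = a^(T b) * (a^(4*5^k))^t := by
          rw [← pow_mul, ← pow_add]
          congr 1
          omega
        rw [e]
        calc a^(T b) * (a^(4*5^k))^t
            ≡ a^(T b) * 1^t [MOD 5^(n+k)] :=
              Nat.ModEq.mul_left _ ((pow_modeq_one' a n hn1 hpn k).pow t)
          _ = a^(T b) := by simp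
      have hle : n + k ≤ T b := by
        calc n + k = (b-1)*n := hbn
          _ ≤ (b-1)*a^2 := Nat.mul_le_mul_left _ hna
          _ ≤ T b := hsize b hb
      have h2modX : 2^(n+k) ∣ a^(T (b+1)) :=
        dvd_trans (pow_dvd_pow 2 (le_trans hle hXY)) (pow_dvd_pow_of_dvd haeven _)
      have h2modY : 2^(n+k) ∣ a^(T b) :=
        dvd_trans (pow_dvd_pow 2 hle) (pow_dvd_pow_of_dvd haeven _)
      have h2mod : a^(T (b+1)) ≡ a^(T b) [MOD 2^(n+k)] :=
        (Nat.modEq_zero_iff_dvd.mpr h2modX).trans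
          (Nat.modEq_zero_iff_dvd.mpr h2modY).symm
      have hco : Nat.Coprime (2^(n+k)) (5^(n+k)) :=
        Nat.Coprime.pow _ _ (by norm_num)
      have hfinal : a^(T (b+1)) ≡ a^(T b) [MOD 2^(n+k) * 5^(n+k)] :=
        (Nat.modEq_and_modEq_iff_modEq_mul hco).mp ⟨h2mod, h5mod⟩
      have hmod : 2^(n+k)*5^(n+k) = 10^((b+1-2)*n) := by
        rw [← Nat.mul_pow, show b+1-2 = b-1 from by omega, ← hbn]
      rw [← hT b, ← hT (b+1), hmod] at hfinal
      exact hfinal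
end

section
/- Let a be a natural number with a ≡ 8 (mod 20) or a ≡ 12 (mod 20), and let n = v_5(a^2+1). Define T(1) = a, T(b+1) = a^(T(b)). Then for every b ≥ 1, T(b+1) ≡ T(b) (mod 10^{(b-1)·n}). -/
theorem stmt15 (a : ℕ) (ha : a % 20 = 8 ∨ a % 20 = 12)
    (n : ℕ) (hn : n = padicValNat 5 (a ^ 2 + 1))
    (T : ℕ → ℕ) (hT1 : T 1 = a) (hT : ∀ b, T (b + 1) = a ^ T b) :
    ∀ b, 1 ≤ b → T (b + 1) ≡ T b [MOD 10 ^ ((b - 1) * n)] := by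
  have ha8 : 8 ≤ a := by have := Nat.mod_le a 20; omega
  have h4a : 4 ∣ a := by
    have h := Nat.mod_mod_of_dvd a (by norm_num : (4:ℕ) ∣ 20)
    omega
  have h2a : 2 ∣ a := dvd_trans (by norm_num) h4a
  have h5dvd : 5 ∣ a ^ 2 + 1 := by
    have h := Nat.mod_mod_of_dvd a (by norm_num : (5:ℕ) ∣ 20)
    have h5 : a % 5 = 3 ∨ a % 5 = 2 := by omega
    have hp : a ^ 2 % 5 = (a % 5) ^ 2 % 5 := Nat.pow_mod a 2 5
    rcases h5 with h5 | h5 <;> rw [h5] at hp <;> norm_num at hp <;> omega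
  have hn1 : 1 ≤ n := by
    rw [hn]
    haveI : Fact (Nat.Prime 5) := ⟨by norm_num⟩
    exact one_le_padicValNat_of_dvd (by positivity) h5dvd
  have h5n : 5 ^ n ∣ a ^ 2 + 1 := by
    rw [hn]; exact pow_padicValNat_dvd
  -- n < a
  have hna : n < a := by
    have h1 : 5 ^ n ≤ a ^ 2 + 1 := Nat.le_of_dvd (by positivity) h5n
    have h2 : a < 2 ^ a := (Nat.lt_two_pow_self (n := a))
    have h3 : a ^ 2 + 1 ≤ 4 ^ a := by
      have hx : a ^ 2 < (2 ^ a) ^ 2 := Nat.pow_lt_pow_left h2 (by norm_num)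
      have h4 : (2 ^ a) ^ 2 = 4 ^ a := by
        rw [← Nat.pow_mul, Nat.mul_comm, Nat.pow_mul]
      omega
    have h4 : (4:ℕ) ^ a < 5 ^ a := Nat.pow_lt_pow_left (by norm_num) (by omega)
    have h5 : (5:ℕ) ^ n < 5 ^ a := by omega
    exact (Nat.pow_lt_pow_iff_right (by norm_num)).mp h5
  -- 2m ≤ 2^m
  have two_mul_le : ∀ m : ℕ, 2 * m ≤ 2 ^ m ∨ m = 0 := by
    intro m
    induction m with
    | zero => right; rfl
    | succ k ih =>
      left
      rcases Nat.eq_zero_or_pos k with h | h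
      · subst h; norm_num
      · have ihl : 2 * k ≤ 2 ^ k := by
          rcases ih with ih | ih
          · exact ih
          · omega
        have h2 : 2 ≤ 2 ^ k := by
          calc 2 = 2 * 1 := by norm_num
          _ ≤ 2 * k := by omega
          _ ≤ 2 ^ k := ihl
        rw [pow_succ]; omega
  -- key power congruences mod powers of 5, over ℤ
  have hB : ∀ k : ℕ, (5:ℤ) ^ (n + k) ∣ (a:ℤ) ^ (4 * 5 ^ k) - 1 := by
    intro k
    induction k with
    | zero =>
      have hc : ((5:ℤ)) ^ n ∣ ((a:ℤ) ^ 2 + 1) := by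
        have := Int.natCast_dvd_natCast.mpr h5n
        push_cast at this
        exact this
      have : (a:ℤ) ^ (4 * 5 ^ 0) - 1 = ((a:ℤ) ^ 2 + 1) * ((a:ℤ) ^ 2 - 1) := by ring
      rw [Nat.add_zero, this]
      exact Dvd.dvd.mul_right hc _
    | succ k ih =>
      set x : ℤ := (a:ℤ) ^ (4 * 5 ^ k) with hx
      have h51 : (5:ℤ) ∣ x - 1 := by
        refine dvd_trans ?_ ih
        exact dvd_pow_self 5 (by omega)
      obtain ⟨c, hc⟩ := h51
      have hsum : (5:ℤ) ∣ x ^ 4 + x ^ 3 + x ^ 2 + x + 1 := by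
        have hx1 : x = 5 * c + 1 := by omega
        exact ⟨125 * c ^ 4 + 125 * c ^ 3 + 50 * c ^ 2 + 10 * c + 1, by rw [hx1]; ring⟩
      have hexp : (a:ℤ) ^ (4 * 5 ^ (k + 1)) = x ^ 5 := by
        rw [hx, ← pow_mul]
        ring_nf
      have hfac : x ^ 5 - 1 = (x - 1) * (x ^ 4 + x ^ 3 + x ^ 2 + x + 1) := by ring
      rw [hexp, hfac]
      have : (5:ℤ) ^ (n + k) * 5 ∣ (x - 1) * (x ^ 4 + x ^ 3 + x ^ 2 + x + 1) :=
        mul_dvd_mul ih hsum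
      have he : (5:ℤ) ^ (n + (k + 1)) = 5 ^ (n + k) * 5 := by ring
      rw [he]; exact this
  have keyB : ∀ k d : ℕ, 4 ∣ d → 5 ^ k ∣ d → (5:ℤ) ^ (n + k) ∣ (a:ℤ) ^ d - 1 := by
    intro k d h4 h5
    have hcop : Nat.Coprime 4 (5 ^ k) := Nat.Coprime.pow_right k (by norm_num)
    have hmul : 4 * 5 ^ k ∣ d := hcop.mul_dvd_of_dvd_of_dvd h4 h5
    obtain ⟨t, ht⟩ := hmul
    have : (a:ℤ) ^ d = ((a:ℤ) ^ (4 * 5 ^ k)) ^ t := by rw [← pow_mul, ← ht]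
    rw [this]
    calc (5:ℤ) ^ (n + k) ∣ (a:ℤ) ^ (4 * 5 ^ k) - 1 := hB k
    _ ∣ ((a:ℤ) ^ (4 * 5 ^ k)) ^ t - 1 := by
        have := sub_dvd_pow_sub_pow ((a:ℤ) ^ (4 * 5 ^ k)) 1 t
        simpa using this
  -- positivity and monotonicity of T
  have hTpos : ∀ b, 1 ≤ b → 1 ≤ T b := by
    intro b hb
    induction b with
    | zero => omega
    | succ c ih =>
      rcases Nat.eq_zero_or_pos c with h | h
      · subst h; rw [hT1]; omega
      · rw [hT c]; exact Nat.one_le_pow _ _ (by omega)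
  have h4T : ∀ b, 1 ≤ b → 4 ∣ T b := by
    intro b hb
    rcases Nat.eq_zero_or_pos (b - 1) with h | h
    · have : b = 1 := by omega
      rw [this, hT1]; exact h4a
    · obtain ⟨c, rfl⟩ : ∃ c, b = c + 1 := ⟨b - 1, by omega⟩
      rw [hT c]
      exact dvd_pow h4a (by have := hTpos c (by omega); omega)
  have hTmono : ∀ b, T b < T (b + 1) := by
    intro b
    rw [hT b]
    calc T b < 2 ^ T b := Nat.lt_two_pow_self
    _ ≤ a ^ T b := Nat.pow_le_pow_left (by omega) _
  -- main strengthened induction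
  have Q : ∀ b, 1 ≤ b → b * n ≤ T b ∧ (5:ℤ) ^ ((b - 1) * n) ∣ (T (b + 1) : ℤ) - T b := by
    intro b hb
    induction b, hb using Nat.le_induction with
    | base =>
      constructor
      · rw [hT1]; omega
      · simp
    | succ b hb ih =>
      obtain ⟨ih1, ih2⟩ := ih
      have hTb1 : 1 ≤ T b := hTpos b hb
      have hgrow : (b + 1) * n ≤ T (b + 1) := by
        rw [hT b]
        have h1 : (b + 1) * n ≤ 2 * T b := by
          have he : (b + 1) * n = b * n + n := by ring
          have hbn : n ≤ b * n := Nat.le_mul_of_pos_left n hb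
          omega
        have h2 : 2 * T b ≤ 2 ^ T b := by rcases two_mul_le (T b) with h | h; exact h; omega
        calc (b + 1) * n ≤ 2 ^ T b := le_trans h1 h2
        _ ≤ a ^ T b := Nat.pow_le_pow_left (by omega) _
      refine ⟨hgrow, ?_⟩
      -- 5-part for next step
      have hle : T b ≤ T (b + 1) := le_of_lt (hTmono b)
      have hd4 : 4 ∣ T (b + 1) - T b :=
        Nat.dvd_sub (h4T (b + 1) (by omega)) (h4T b hb)
      have hd5 : 5 ^ ((b - 1) * n) ∣ T (b + 1) - T b := by
        have : ((5:ℤ)) ^ ((b - 1) * n) ∣ ((T (b + 1) - T b : ℕ) : ℤ) := by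
          rwa [Nat.cast_sub hle]
        exact_mod_cast this
      have hkey := keyB ((b - 1) * n) (T (b + 1) - T b) hd4 hd5
      have hexp : (a:ℤ) ^ T (b + 1) - (a:ℤ) ^ T b
          = (a:ℤ) ^ T b * ((a:ℤ) ^ (T (b + 1) - T b) - 1) := by
        rw [mul_sub, ← pow_add, Nat.add_sub_cancel' hle, mul_one]
      have hpow : (5:ℤ) ^ (n + (b - 1) * n) ∣ (a:ℤ) ^ T (b + 1) - (a:ℤ) ^ T b := by
        rw [hexp]; exact Dvd.dvd.mul_left hkey _
      have hee : n + (b - 1) * n = (b + 1 - 1) * n := by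
        obtain ⟨c, rfl⟩ : ∃ c, b = c + 1 := ⟨b - 1, by omega⟩
        simp; ring
      rw [hT (b + 1), hT b] at *
      rw [← hee]
      push_cast
      exact hpow
  -- conclude
  intro b hb
  rcases Nat.eq_or_lt_of_le hb with h1 | h1
  · rw [← h1]
    simp [Nat.ModEq, Nat.mod_one]
  · obtain ⟨c, rfl⟩ : ∃ c, b = c + 1 := ⟨b - 1, by omega⟩
    have hc1 : 1 ≤ c := by omega
    have h5part : (5:ℤ) ^ (c * n) ∣ (T (c + 2) : ℤ) - T (c + 1) := by
      have := (Q (c + 1) (by omega)).2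
      simpa using this
    have h2part : (2:ℤ) ^ (c * n) ∣ (T (c + 2) : ℤ) - T (c + 1) := by
      have hd1 : 2 ^ (c * n) ∣ T (c + 1) := by
        rw [hT c]
        have h1 : c * n ≤ T c := (Q c hc1).1
        exact dvd_trans (pow_dvd_pow 2 h1) (pow_dvd_pow_of_dvd h2a _)
      have hd2 : 2 ^ (c * n) ∣ T (c + 2) := by
        rw [hT (c + 1)]
        have h1 : c * n ≤ T (c + 1) := le_trans (by nlinarith) (Q (c+1) (by omega)).1
        exact dvd_trans (pow_dvd_pow 2 h1) (pow_dvd_pow_of_dvd h2a _)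
      have := dvd_sub (Int.natCast_dvd_natCast.mpr hd2) (Int.natCast_dvd_natCast.mpr hd1)
      push_cast at this ⊢
      exact this
    have hcop : IsCoprime ((2:ℤ) ^ (c * n)) ((5:ℤ) ^ (c * n)) := by
      apply IsCoprime.pow
      rw [Int.isCoprime_iff_gcd_eq_one]
      norm_num
    have h10 : ((10:ℕ) ^ ((c + 1 - 1) * n) : ℤ) ∣ (T (c + 2) : ℤ) - T (c + 1) := by
      have he : ((10:ℕ) ^ ((c + 1 - 1) * n) : ℤ) = (2:ℤ) ^ (c * n) * (5:ℤ) ^ (c * n) := by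
        push_cast
        rw [← mul_pow]
        norm_num
      rw [he]
      exact hcop.mul_dvd h2part h5part
    rw [Nat.ModEq.comm, Nat.modEq_iff_dvd]
    exact_mod_cast h10
end

section
/- Define T(1) = 2 and T(b+1) = 2^(T(b)). Then for every b ≥ 3, T(b+1) ≡ T(b) (mod 10^{b-2}). -/
lemma aux_tot (k : ℕ) : 2 ^ (4 * 5 ^ k) ≡ 1 [MOD 5 ^ (k + 1)] := by
  have hcop : Nat.Coprime 2 (5 ^ (k + 1)) :=
    Nat.Coprime.pow_right _ (by decide)
  have h := Nat.ModEq.pow_totient hcop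
  rw [Nat.totient_prime_pow (by norm_num) (Nat.succ_pos k)] at h
  simpa [Nat.succ_sub_one, mul_comm] using h

lemma aux_pow_le {a b n m : ℕ} (hle : a ≤ b) (h : a ≡ b [MOD n])
    (h2 : 2 ^ n ≡ 1 [MOD m]) : 2 ^ a ≡ 2 ^ b [MOD m] := by
  obtain ⟨c, hc⟩ := (Nat.modEq_iff_dvd' hle).mp h
  have hb : b = a + n * c := by omega
  subst hb
  have hpow : (2 ^ n : ℕ) ^ c ≡ 1 [MOD m] := by
    have := h2.pow c
    simpa using this
  have key : 2 ^ (a + n * c) ≡ 2 ^ a [MOD m] := by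
    rw [pow_add, pow_mul]
    calc (2:ℕ) ^ a * (2 ^ n) ^ c ≡ 2 ^ a * 1 [MOD m] := (Nat.ModEq.refl _).mul hpow
      _ = 2 ^ a := mul_one _
  exact key.symm

lemma aux_pow_s16 {a b n m : ℕ} (h : a ≡ b [MOD n]) (h2 : 2 ^ n ≡ 1 [MOD m]) :
    2 ^ a ≡ 2 ^ b [MOD m] := by
  rcases le_total a b with hle | hle
  · exact aux_pow_le hle h h2
  · exact (aux_pow_le hle h.symm h2).symm

theorem stmt16 (T : ℕ → ℕ) (hT1 : T 1 = 2) (hT : ∀ b, T (b + 1) = 2 ^ T b) :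
    ∀ b, 3 ≤ b → T (b + 1) ≡ T b [MOD 10 ^ (b - 2)] := by
  have hge : ∀ b, 1 ≤ b → b ≤ T b := by
    intro b hb
    induction b with
    | zero => omega
    | succ n ih =>
      rcases Nat.eq_or_lt_of_le hb with h | h
      · simp [← h, hT1]
      · have hn : 1 ≤ n := by omega
        have h1 := ih hn
        rw [hT n]
        have h2 : n + 1 ≤ 2 ^ n := Nat.lt_two_pow_self (n := n)
        exact le_trans h2 (Nat.pow_le_pow_right (by norm_num) h1)
  have hdvd : ∀ b e, 1 ≤ b → e ≤ b → 2 ^ e ∣ T (b + 1) := by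
    intro b e hb he
    rw [hT b]
    exact pow_dvd_pow 2 (le_trans he (hge b hb))
  -- main induction: mod 4 * 5^(k+1)
  have main : ∀ k, T (k + 4) ≡ T (k + 3) [MOD 4 * 5 ^ (k + 1)] := by
    intro k
    induction k with
    | zero =>
      have h2 : T 2 = 4 := by rw [hT 1, hT1]; norm_num
      have h3 : T 3 = 16 := by rw [hT 2, h2]; norm_num
      have h4 : T 4 = 65536 := by rw [hT 3, h3]; norm_num
      show T 4 ≡ T 3 [MOD 4 * 5 ^ 1]
      rw [h4, h3]
      decide
    | succ n ih =>
      have h5 : T (n + 5) ≡ T (n + 4) [MOD 5 ^ (n + 2)] := by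
        have key : (2:ℕ) ^ T (n + 4) ≡ 2 ^ T (n + 3) [MOD 5 ^ (n + 2)] :=
          aux_pow_s16 ih (aux_tot (n + 1))
        rwa [← hT (n + 4), ← hT (n + 3)] at key
      have h4a : (2:ℕ) ^ 2 ∣ T (n + 5) := hdvd (n + 4) 2 (by omega) (by omega)
      have h4b : (2:ℕ) ^ 2 ∣ T (n + 4) := hdvd (n + 3) 2 (by omega) (by omega)
      have h4a' : (4:ℕ) ∣ T (n + 5) := by norm_num at h4a; exact h4a
      have h4b' : (4:ℕ) ∣ T (n + 4) := by norm_num at h4b; exact h4b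
      have h4 : T (n + 5) ≡ T (n + 4) [MOD 4] :=
        (Nat.modEq_zero_iff_dvd.mpr h4a').trans (Nat.modEq_zero_iff_dvd.mpr h4b').symm
      have hcop : Nat.Coprime 4 (5 ^ (n + 2)) :=
        Nat.Coprime.pow_right _ (by decide)
      exact (Nat.modEq_and_modEq_iff_modEq_mul hcop).mp ⟨h4, h5⟩
  intro b hb
  obtain ⟨k, rfl⟩ : ∃ k, b = k + 3 := ⟨b - 3, by omega⟩
  have h5 : T (k + 4) ≡ T (k + 3) [MOD 5 ^ (k + 1)] :=
    (main k).of_mul_left 4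
  have h2a : 2 ^ (k + 1) ∣ T (k + 4) := hdvd (k + 3) (k + 1) (by omega) (by omega)
  have h2b : 2 ^ (k + 1) ∣ T (k + 3) := hdvd (k + 2) (k + 1) (by omega) (by omega)
  have h2 : T (k + 4) ≡ T (k + 3) [MOD 2 ^ (k + 1)] :=
    (Nat.modEq_zero_iff_dvd.mpr h2a).trans (Nat.modEq_zero_iff_dvd.mpr h2b).symm
  have hcop : Nat.Coprime (2 ^ (k + 1)) (5 ^ (k + 1)) :=
    Nat.Coprime.pow _ _ (by decide)
  have hm := (Nat.modEq_and_modEq_iff_modEq_mul hcop).mp ⟨h2, h5⟩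
  have heq : (10 : ℕ) ^ (k + 3 - 2) = 2 ^ (k + 1) * 5 ^ (k + 1) := by
    rw [show k + 3 - 2 = k + 1 from rfl, ← mul_pow]
    norm_num
  rwa [heq]
end
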